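/- Let p, q, k be three distinct atoms in 𝒫. For all weights w, w₁, w₂ (each a real number or α), the LP^MLN program {w : (p → q) → k} is not strongly equivalent to the LP^MLN program {w₁ : (q ∨ ¬p) → k, w₂ : k ∨ p ∨ ¬q}. -/

import Mathlib

namespace LPMLN

/-- Propositional formulas over a set of atoms `P`, built from atoms and `⊥`
using `∧`, `∨`, `→`. -/
inductive Formula (P : Type) : Type where
  | atom : P → Formula P
  | bot  : Formula P
  | and  : Formula P → Formula P → Formula P
  | or   : Formula P → Formula P → Formula P
  | imp  : Formula P → Formula P → Formula P
deriving DecidableEq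

variable {P : Type} [DecidableEq P]

/-- `¬F` abbreviates `F → ⊥`. -/
def Formula.neg (F : Formula P) : Formula P := .imp F .bot

/-- Classical evaluation of a formula in an interpretation `X ⊆ P`. -/
def Formula.eval (X : Finset P) : Formula P → Bool
  | .atom p => decide (p ∈ X)
  | .bot => false
  | .and F G => F.eval X && G.eval X
  | .or F G => F.eval X || G.eval X
  | .imp F G => !(F.eval X) || G.eval X

/-- Classical satisfaction `X ⊨ F`. -/
def Formula.sat (X : Finset P) (F : Formula P) : Prop := F.eval X = true

/-- The reduct `F^X`: every maximal subformula not satisfied by `X` is replaced by `⊥`. -/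
def Formula.reduct (X : Finset P) : Formula P → Formula P
  | .atom p => if p ∈ X then .atom p else .bot
  | .bot => .bot
  | .and F G => if (Formula.and F G).eval X then .and (F.reduct X) (G.reduct X) else .bot
  | .or F G => if (Formula.or F G).eval X then .or (F.reduct X) (G.reduct X) else .bot
  | .imp F G => if (Formula.imp F G).eval X then .imp (F.reduct X) (G.reduct X) else .bot

/-- `X` satisfies a (finite) set of formulas. -/
def satSet (X : Finset P) (Γ : Finset (Formula P)) : Prop := ∀ F ∈ Γ, F.sat X

/-- The reduct `Γ^X` of a finite set of formulas. -/
def reductSet (X : Finset P) (Γ : Finset (Formula P)) : Finset (Formula P) :=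
  Γ.image (Formula.reduct X)

/-- `X` is a stable model of `Γ` if `X ⊨ Γ^X` and no proper subset of `X` satisfies `Γ^X`. -/
def StableModel (Γ : Finset (Formula P)) (X : Finset P) : Prop :=
  satSet X (reductSet X Γ) ∧ ∀ Y, Y ⊂ X → ¬ satSet Y (reductSet X Γ)

/-- A weight is a real number (soft) or the symbol `α` (hard). -/
inductive Weight : Type where
  | soft : ℝ → Weight
  | hard : Weight

noncomputable instance : DecidableEq Weight := Classical.decEq _

/-- An LP^MLN program: a finite set of weighted formulas `w : R`. -/
abbrev Program (P : Type) [DecidableEq P] := Finset (Weight × Formula P)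

/-- `𝔽_X`: the weighted formulas of `𝔽` whose formula is satisfied by `X`. -/
noncomputable def progSat (𝔽 : Program P) (X : Finset P) : Program P :=
  𝔽.filter (fun r => r.2.eval X = true)

/-- `𝔽̄`: the formulas of `𝔽`, with weights dropped. -/
noncomputable def formulas (𝔽 : Program P) : Finset (Formula P) := 𝔽.image Prod.snd

/-- `X` is a soft stable model of `𝔽` (i.e. `X ∈ SM[𝔽]`) if `X` is a stable model of `𝔽̄_X`. -/
def SoftStable (𝔽 : Program P) (X : Finset P) : Prop :=
  StableModel (formulas (progSat 𝔽 X)) X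

/-- w-expressions: either zero or a formal expression `e^{c₁ + c₂·α}` with `c₁ : ℝ`, `c₂ : ℤ`. -/
inductive WExpr : Type where
  | zero : WExpr
  | exp : ℝ → ℤ → WExpr

/-- Multiplication of w-expressions: add exponents componentwise; zero is absorbing. -/
def WExpr.mul : WExpr → WExpr → WExpr
  | .zero, _ => .zero
  | _, .zero => .zero
  | .exp a b, .exp c d => .exp (a + c) (b + d)

/-- Inverse of a w-expression: negate both exponents. -/
def WExpr.inv : WExpr → WExpr
  | .zero => .zero
  | .exp a b => .exp (-a) (-b)

/-- Evaluation of a w-expression at a real number `a`. -/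
noncomputable def WExpr.eval (a : ℝ) : WExpr → ℝ
  | .zero => 0
  | .exp c₁ c₂ => Real.exp (c₁ + c₂ * a)

/-- The real contribution of a weight (hard rules contribute `0` to the soft sum). -/
def softWeight : Weight → ℝ
  | .soft r => r
  | .hard => 0

/-- Sum of the weights of the soft rules of `𝔽`. -/
noncomputable def softSum (𝔽 : Program P) : ℝ := ∑ r ∈ 𝔽, softWeight r.1

/-- The number of hard rules of `𝔽`. -/
noncomputable def hardCount (𝔽 : Program P) : ℤ :=
  ((𝔽.filter (fun r => r.1 = Weight.hard)).card : ℤ)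

/-- `TW(𝔽) = e^{c₁ + c₂·α}` where `c₁` is the sum of the soft weights and
`c₂` the number of hard rules. -/
noncomputable def TW (𝔽 : Program P) : WExpr := .exp (softSum 𝔽) (hardCount 𝔽)

open Classical in
/-- `W_𝔽(X) = TW(𝔽_X)` if `X ∈ SM[𝔽]`, and zero otherwise. -/
noncomputable def W (𝔽 : Program P) (X : Finset P) : WExpr :=
  if SoftStable 𝔽 X then TW (progSat 𝔽 X) else .zero

open Classical in
/-- `W^pnt_𝔽(X) = TW(𝔽 \ 𝔽_X)⁻¹` if `X ∈ SM[𝔽]`, and zero otherwise. -/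
noncomputable def Wpnt (𝔽 : Program P) (X : Finset P) : WExpr :=
  if SoftStable 𝔽 X then (TW (𝔽 \ progSat 𝔽 X)).inv else .zero

/-- `P_𝔽(X)`: the limit as `a → ∞` of the normalized evaluation of `W_𝔽(X)`. -/
noncomputable def Pr [Fintype P] (𝔽 : Program P) (X : Finset P) : ℝ :=
  Filter.limUnder Filter.atTop
    (fun a : ℝ => (W 𝔽 X).eval a / ∑ Y : Finset P, (W 𝔽 Y).eval a)

/-- `P^pnt_𝔽(X)`: the limit as `a → ∞` of the normalized evaluation of `W^pnt_𝔽(X)`. -/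
noncomputable def PrPnt [Fintype P] (𝔽 : Program P) (X : Finset P) : ℝ :=
  Filter.limUnder Filter.atTop
    (fun a : ℝ => (Wpnt 𝔽 X).eval a / ∑ Y : Finset P, (Wpnt 𝔽 Y).eval a)

/-- Weak equivalence: the same probability distribution. -/
def WeakEquiv [Fintype P] (𝔽 𝔾 : Program P) : Prop :=
  ∀ X : Finset P, Pr 𝔽 X = Pr 𝔾 X

/-- Strong equivalence of LP^MLN programs. -/
def StrongEquiv [Fintype P] (𝔽 𝔾 : Program P) : Prop :=
  ∀ (ℍ : Program P) (X : Finset P), Pr (𝔽 ∪ ℍ) X = Pr (𝔾 ∪ ℍ) X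

/-- Structural equivalence of LP^MLN programs. -/
def StructEquiv (𝔽 𝔾 : Program P) : Prop :=
  ∀ (ℍ : Program P) (X : Finset P), SoftStable (𝔽 ∪ ℍ) X ↔ SoftStable (𝔾 ∪ ℍ) X

/-- HT satisfaction `⟨Y,X⟩ ⊨ₕₜ F` (at the world "here"). -/
def htSat (Y X : Finset P) : Formula P → Prop
  | .atom p => p ∈ Y
  | .bot => False
  | .and F G => htSat Y X F ∧ htSat Y X G
  | .or F G => htSat Y X F ∨ htSat Y X G
  | .imp F G => (htSat Y X F → htSat Y X G) ∧ (Formula.imp F G).sat X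

/-- `⟨Y,X⟩` is an HT model of a set `Γ` of formulas. -/
def HTModel (Γ : Finset (Formula P)) (Y X : Finset P) : Prop :=
  Y ⊆ X ∧ ∀ F ∈ Γ, htSat Y X F

/-- `⟨Y,X⟩` is a soft HT model of an LP^MLN program `𝔽`. -/
def SoftHT (𝔽 : Program P) (Y X : Finset P) : Prop :=
  Y ⊆ X ∧ ∀ r ∈ progSat 𝔽 X, htSat Y X r.2

/-- The choice formula `{F}^ch = F ∨ ¬F`. -/
def Formula.ch (F : Formula P) : Formula P := .or F F.neg

/-- `{Γ}^ch`, choice formulas of a set of formulas. -/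
def chSet (Γ : Finset (Formula P)) : Finset (Formula P) := Γ.image Formula.ch

/-- Renaming of atoms. -/
def Formula.rename {Q : Type} (f : P → Q) : Formula P → Formula Q
  | .atom p => .atom (f p)
  | .bot => .bot
  | .and F G => .and (F.rename f) (G.rename f)
  | .or F G => .or (F.rename f) (G.rename f)
  | .imp F G => .imp (F.rename f) (G.rename f)

/-- `Δ_{𝒫'}(F)`, a formula over `𝒫 ∪ 𝒫'`; unprimed atoms are `Sum.inl p`,
primed atoms `p'` are `Sum.inr p`. -/
def Formula.delta : Formula P → Formula (P ⊕ P)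
  | .atom p => .atom (Sum.inr p)
  | .bot => .bot
  | .and F G => .and F.delta G.delta
  | .or F G => .or F.delta G.delta
  | .imp F G => .and (.imp F.delta G.delta)
      (.imp (F.rename Sum.inl) (G.rename Sum.inl))

/-- `Δ_{𝒫'}(Γ)` for a set of formulas. -/
def deltaSet (Γ : Finset (Formula P)) : Finset (Formula (P ⊕ P)) :=
  Γ.image Formula.delta

/-- The interpretation `Y' ∪ X` of `𝒫 ∪ 𝒫'`. -/
def primedInterp (Y X : Finset P) : Finset (P ⊕ P) :=
  X.image Sum.inl ∪ Y.image Sum.inr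

/-!
Add the hard rules `q` and `¬k` to both programs and look at `X = {p, q}`. There
`(p → q) → k` is false, so the reduct of the first program at `X` is `{q, ⊤}`, already
satisfied by `{q}`: `X` is not a soft stable model and gets probability `0`. In the second
program `k ∨ p ∨ ¬q` reduces to `p`, which together with `q` makes `X` a soft stable model.
Since `(q ∨ ¬p) → k`, `q` and `¬k` are jointly unsatisfiable, no interpretation satisfies
more hard rules than `X`, so the weight of `X` does not vanish relative to the total as
`α → ∞`, and `X` gets positive probability.
-/

open Filter Topology

theorem Formula.eval_reduct_self (X : Finset P) (F : Formula P) :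
    (F.reduct X).eval X = F.eval X := by
  induction F with
  | atom a => by_cases h : a ∈ X <;> simp [Formula.reduct, Formula.eval, h]
  | bot => rfl
  | and F G ihF ihG =>
    unfold Formula.reduct; split <;> simp_all [Formula.eval]
  | or F G ihF ihG =>
    unfold Formula.reduct; split <;> simp_all [Formula.eval]
  | imp F G ihF ihG =>
    unfold Formula.reduct; split <;> simp_all [Formula.eval]

theorem satSet_reductSet_formulas_progSat_iff (𝔽 : Program P) (X Y : Finset P) :
    satSet Y (reductSet X (formulas (progSat 𝔽 X))) ↔
      ∀ r ∈ 𝔽, r.2.sat X → (r.2.reduct X).sat Y := by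
  simp only [satSet, reductSet, formulas, progSat, Formula.sat, Finset.forall_mem_image,
    Finset.mem_filter, and_imp, Prod.forall]

theorem softStable_iff (𝔽 : Program P) (X : Finset P) :
    SoftStable 𝔽 X ↔ ∀ Y ⊂ X, ¬ ∀ r ∈ 𝔽, r.2.sat X → (r.2.reduct X).sat Y := by
  have hX : satSet X (reductSet X (formulas (progSat 𝔽 X))) :=
    (satSet_reductSet_formulas_progSat_iff 𝔽 X X).2 fun r _ hr => by
      rwa [Formula.sat, Formula.eval_reduct_self]
  simp only [SoftStable, StableModel, satSet_reductSet_formulas_progSat_iff, hX, true_and]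

theorem hardCount_progSat_le_of_exchange (𝔽 : Program P) (r : Weight × Formula P)
    {X Y : Finset P} (hX : ∀ s ∈ 𝔽, s ≠ r → s.2.sat X)
    (hY : r.1 = .hard → r.2.sat Y →
      ∃ j ∈ 𝔽, j ≠ r ∧ j.1 = .hard ∧ ¬ j.2.sat Y) :
    hardCount (progSat 𝔽 Y) ≤ hardCount (progSat 𝔽 X) := by
  set hardSat : Finset P → Program P :=
    fun Z => (progSat 𝔽 Z).filter (fun s => s.1 = .hard) with hhardSat
  have mem_hardSat : ∀ Z s, s ∈ hardSat Z ↔ s ∈ 𝔽 ∧ s.2.sat Z ∧ s.1 = .hard := by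
    simp [hhardSat, progSat, Formula.sat, and_assoc]
  have hsub : hardSat Y ⊆ insert r (hardSat X) := by
    intro s hs
    obtain ⟨hs𝔽, hsY, hsh⟩ := (mem_hardSat Y s).1 hs
    by_cases hsr : s = r
    · exact hsr ▸ Finset.mem_insert_self _ _
    · exact Finset.mem_insert_of_mem ((mem_hardSat X s).2 ⟨hs𝔽, hX s hs𝔽 hsr, hsh⟩)
  unfold hardCount
  change ((hardSat Y).card : ℤ) ≤ (hardSat X).card
  rw [Nat.cast_le]
  by_cases hr : r ∈ hardSat Y
  · obtain ⟨-, hrY, hrh⟩ := (mem_hardSat Y r).1 hr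
    obtain ⟨j, hj𝔽, hjr, hjh, hjY⟩ := hY hrh hrY
    have hjX : j ∈ hardSat X := (mem_hardSat X j).2 ⟨hj𝔽, hX j hj𝔽 hjr, hjh⟩
    have hsub' : hardSat Y ⊆ insert r ((hardSat X).erase j) := by
      intro s hs
      rcases Finset.mem_insert.1 (hsub hs) with h | h
      · exact h ▸ Finset.mem_insert_self _ _
      · refine Finset.mem_insert_of_mem (Finset.mem_erase.2 ⟨?_, h⟩)
        rintro rfl
        exact hjY ((mem_hardSat Y s).1 hs).2.1
    calc (hardSat Y).card ≤ (insert r ((hardSat X).erase j)).card := Finset.card_le_card hsub'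
      _ ≤ ((hardSat X).erase j).card + 1 := Finset.card_insert_le _ _
      _ = (hardSat X).card := Finset.card_erase_add_one hjX
  · exact Finset.card_le_card fun s hs =>
      (Finset.mem_insert.1 (hsub hs)).resolve_left fun h => hr (h ▸ hs)

theorem softStable_of_W_eq_exp {𝔽 : Program P} {Y : Finset P} {s : ℝ} {c : ℤ}
    (h : W 𝔽 Y = .exp s c) : SoftStable 𝔽 Y ∧ c = hardCount (progSat 𝔽 Y) := by
  unfold W at h
  split_ifs at h with hY
  · exact ⟨hY, (WExpr.exp.inj h).2.symm⟩

theorem WExpr.eval_exp_div_eval_exp (a s s' : ℝ) (c m : ℤ) :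
    (WExpr.exp s' c).eval a / (WExpr.exp s m).eval a = Real.exp ((s' - s) + (c - m) * a) := by
  simp only [WExpr.eval, ← Real.exp_sub]
  ring_nf

theorem WExpr.exists_tendsto_eval_div_eval_exp (e : WExpr) (s : ℝ) (m : ℤ)
    (he : ∀ s' c, e = .exp s' c → c ≤ m) :
    ∃ L, 0 ≤ L ∧ Tendsto (fun a => e.eval a / (WExpr.exp s m).eval a) atTop (𝓝 L) := by
  rcases e with _ | ⟨s', c⟩
  · exact ⟨0, le_rfl, by simp [WExpr.eval]⟩
  simp only [WExpr.eval_exp_div_eval_exp]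
  rcases (he s' c rfl).lt_or_eq with hlt | rfl
  · have hcm : ((c : ℝ) - m) < 0 := sub_neg.2 (Int.cast_lt.2 hlt)
    refine ⟨0, le_rfl, Real.tendsto_exp_atBot.comp ?_⟩
    exact tendsto_atBot_add_const_left _ _ ((tendsto_const_mul_atBot_of_neg hcm).2 tendsto_id)
  · exact ⟨Real.exp (s' - s), (Real.exp_pos _).le, by simp⟩

theorem tendsto_div_sum_of_tendsto_div {ι α : Type*} [Fintype ι] {l : Filter α}
    (f : ι → α → ℝ) (i : ι) (L : ι → ℝ) (hL : ∀ j, Tendsto (fun a => f j a / f i a) l (𝓝 (L j)))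
    (hsum : ∑ j, L j ≠ 0) :
    Tendsto (fun a => f i a / ∑ j, f j a) l (𝓝 (∑ j, L j)⁻¹) := by
  have key : ∀ a, f i a / ∑ j, f j a = (∑ j, f j a / f i a)⁻¹ := fun a => by
    rw [← Finset.sum_div, inv_div]
  simpa only [key] using (tendsto_finsetSum _ fun j _ => hL j).inv₀ hsum

section Probability

variable [Fintype P]

theorem Pr_eq_zero_of_not_softStable {𝔽 : Program P} {X : Finset P} (hX : ¬ SoftStable 𝔽 X) :
    Pr 𝔽 X = 0 := by
  have hW : W 𝔽 X = .zero := if_neg hX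
  simpa [Pr, hW, WExpr.eval] using tendsto_const_nhds.limUnder_eq

theorem Pr_pos_of_forall_hardCount_le {𝔽 : Program P} {X : Finset P} (hX : SoftStable 𝔽 X)
    (hmax : ∀ Y, SoftStable 𝔽 Y → hardCount (progSat 𝔽 Y) ≤ hardCount (progSat 𝔽 X)) :
    0 < Pr 𝔽 X := by
  have hWX : W 𝔽 X = .exp (softSum (progSat 𝔽 X)) (hardCount (progSat 𝔽 X)) := if_pos hX
  have hlim : ∀ Y, ∃ L, 0 ≤ L ∧
      Tendsto (fun a => (W 𝔽 Y).eval a / (W 𝔽 X).eval a) atTop (𝓝 L) := fun Y => by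
    rw [hWX]
    refine WExpr.exists_tendsto_eval_div_eval_exp _ _ _ fun s c hY => ?_
    obtain ⟨hYs, rfl⟩ := softStable_of_W_eq_exp hY
    exact hmax Y hYs
  choose L hL0 hL using hlim
  have hLX : L X = 1 := tendsto_nhds_unique (hL X) <| tendsto_const_nhds.congr fun a =>
    (div_self (by rw [hWX]; exact (Real.exp_pos _).ne')).symm
  have hsum : 1 ≤ ∑ Y, L Y := hLX ▸ Finset.single_le_sum (fun Y _ => hL0 Y) (Finset.mem_univ X)
  have hPr : Pr 𝔽 X = (∑ Y, L Y)⁻¹ :=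
    (tendsto_div_sum_of_tendsto_div (fun Y a => (W 𝔽 Y).eval a) X L hL (by linarith)).limUnder_eq
  rw [hPr]
  positivity

end Probability

section Counterexample

variable {p q k : P}

theorem not_softStable_counterexample_left (hpq : p ≠ q) (hpk : p ≠ k) (hqk : q ≠ k)
    (w : Weight) :
    ¬ SoftStable ({(w, Formula.imp (Formula.imp (.atom p) (.atom q)) (.atom k))} ∪
      {(.hard, .atom q), (.hard, Formula.neg (.atom k))}) {p, q} := by
  rw [softStable_iff]
  refine fun h => h {q} ?_ ?_
  · exact Finset.ssubset_iff_of_subset (by simp) |>.2 ⟨p, by simp, by simpa using hpq⟩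
  · simp [Formula.sat, Formula.eval, Formula.reduct, Formula.neg, hpk.symm, hqk.symm]

theorem softStable_counterexample_right (hpk : p ≠ k) (hqk : q ≠ k) (w₁ w₂ : Weight) :
    SoftStable ({(w₁, Formula.imp (Formula.or (.atom q) (Formula.neg (.atom p))) (.atom k)),
      (w₂, Formula.or (.atom k) (Formula.or (.atom p) (Formula.neg (.atom q))))} ∪
      {(.hard, .atom q), (.hard, Formula.neg (.atom k))}) {p, q} := by
  rw [softStable_iff]
  intro Y hY hsat
  have hqp : q ∈ Y ∧ p ∈ Y := by
    simpa [Formula.sat, Formula.eval, Formula.reduct, Formula.neg, hpk.symm, hqk.symm] using hsat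
  exact hY.2 (by simp [Finset.insert_subset_iff, hqp])

variable [Fintype P]

theorem Pr_counterexample_right_pos (hpk : p ≠ k) (hqk : q ≠ k) (w₁ w₂ : Weight) :
    0 < Pr ({(w₁, Formula.imp (Formula.or (.atom q) (Formula.neg (.atom p))) (.atom k)),
      (w₂, Formula.or (.atom k) (Formula.or (.atom p) (Formula.neg (.atom q))))} ∪
      {(.hard, .atom q), (.hard, Formula.neg (.atom k))}) {p, q} := by
  refine Pr_pos_of_forall_hardCount_le (softStable_counterexample_right hpk hqk w₁ w₂)
    fun Y _ => hardCount_progSat_le_of_exchange _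
      (w₁, Formula.imp (Formula.or (.atom q) (Formula.neg (.atom p))) (.atom k)) ?_ ?_
  · simp [Formula.sat, Formula.eval, Formula.neg, hpk.symm, hqk.symm]
  · -- `(q ∨ ¬p) → k`, `q` and `¬k` are jointly unsatisfiable
    intro _ hR1
    by_cases hqY : q ∈ Y
    · refine ⟨(.hard, Formula.neg (.atom k)), by simp, by simp [Formula.neg], rfl, ?_⟩
      simp_all [Formula.sat, Formula.eval, Formula.neg]
    · exact ⟨(.hard, .atom q), by simp, by simp, rfl, by simpa [Formula.sat, Formula.eval]⟩

end Counterexample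

/-- for distinct atoms `p, q, k`, the program `{w : (p → q) → k}` is not
strongly equivalent to `{w₁ : (q ∨ ¬p) → k, w₂ : k ∨ p ∨ ¬q}`, for any weights. -/
theorem stmt8 {P : Type} [DecidableEq P] [Fintype P] (p q k : P)
    (hpq : p ≠ q) (hpk : p ≠ k) (hqk : q ≠ k) (w w₁ w₂ : Weight) :
    ¬ StrongEquiv
        ({(w, Formula.imp (Formula.imp (.atom p) (.atom q)) (.atom k))} : Program P)
        ({(w₁, Formula.imp (Formula.or (.atom q) (Formula.neg (.atom p))) (.atom k)),
          (w₂, Formula.or (.atom k) (Formula.or (.atom p) (Formula.neg (.atom q))))} :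
          Program P) := by
  intro hequiv
  have hX := hequiv {(.hard, .atom q), (.hard, Formula.neg (.atom k))} {p, q}
  rw [Pr_eq_zero_of_not_softStable (not_softStable_counterexample_left hpq hpk hqk w)] at hX
  exact (Pr_counterexample_right_pos hpk hqk w₁ w₂).ne hX

end LPMLN
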